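/- Let (E,ℒ,𝒜) be a weakly left-resolving, normal labelled space. Let s = (μ,A,ν) and t = (β,B,γ) be two nonzero elements of S and let φ be a tight character of E(S) with associated filter ξ^α. Suppose (s,φ), (t,φ) ∈ Ω and that ν is a beginning of γ, say γ = νγ'. Then (s,φ) ∼ (t,φ) if and only if β = μγ'. -/

import Mathlib

open Classical

universe u v w

/-! ## Words over an alphabet -/

/-- Finite-or-infinite words over the alphabet `A`: `Sum.inl l` is the finite word `l`
(with `[]` playing the role of the empty word `ω`), and `Sum.inr f` is the infinite word `f`. -/
abbrev Word (A : Type w) := List A ⊕ (ℕ → A)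

/-- The length `|α| ∈ ℕ∞` of a word. -/
def wlength {A : Type w} : Word A → ℕ∞ :=
  Sum.elim (fun l => (l.length : ℕ∞)) fun _ => ⊤

/-- The finite prefix `α_{1,n}` of a word `α`. -/
def wprefix {A : Type w} : Word A → ℕ → List A :=
  Sum.elim (fun l n => l.take n) fun f n => List.ofFn fun i : Fin n => f i

/-- Concatenation `αβ` of a finite word `α` with a word `β`. -/
def wappend {A : Type w} (α : List A) : Word A → Word A :=
  Sum.elim (fun l => Sum.inl (α ++ l)) fun f =>
    Sum.inr fun n => if h : n < α.length then α.get ⟨n, h⟩ else f (n - α.length)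

/-- `β` is a beginning (finite prefix) of the word `α`. -/
def WPrefix {A : Type w} (β : List A) : Word A → Prop :=
  Sum.elim (fun l => β <+: l) fun f => β = List.ofFn fun i : Fin β.length => f i

/-! ## Triples -/

/-- Formal triples `(α, X, β)` together with a zero element; the inverse semigroup `S`
of a labelled space consists of such elements. -/
inductive Tr (V : Type u) (A : Type w) where
  | zero : Tr V A
  | mk : List A → Set V → List A → Tr V A

/-- The involution `(α,A,β)* = (β,A,α)` (fixing `0`). -/
def Tr.tstar {V : Type u} {A : Type w} : Tr V A → Tr V A
  | .zero => .zero
  | .mk α X β => .mk β X α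

/-! ## Labelled spaces -/

/-- The data of a labelled space `(E, ℒ, 𝒜)`: a directed graph on nonempty vertex/edge
sets, a surjective labelling map onto the alphabet `A`, and a family `𝒜` of subsets
of the vertex set. -/
structure LblSp (V : Type u) (E : Type v) (A : Type w) where
  src : E → V
  rng : E → V
  lab : E → A
  lab_surj : Function.Surjective lab
  nonempty_V : Nonempty V
  nonempty_E : Nonempty E
  𝒜 : Set (Set V)

namespace LblSp

variable {V : Type u} {Ed : Type v} {A : Type w} (Λ : LblSp V Ed A)

/-- `α ≠ ω` is the label of some finite path of the graph. -/
def IsPathLabel (α : List A) : Prop :=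
  ∃ l : List Ed, l ≠ [] ∧ List.Chain' (fun e f => Λ.rng e = Λ.src f) l ∧ l.map Λ.lab = α

/-- `ℒ^*`: the finite labelled paths, together with the empty word. -/
def LStar : Set (List A) := {α | α = [] ∨ Λ.IsPathLabel α}

/-- `ℒ^∞`: the infinite labelled paths. -/
def LInfty : Set (ℕ → A) :=
  {f | ∃ e : ℕ → Ed, (∀ n, Λ.rng (e n) = Λ.src (e (n + 1))) ∧ ∀ n, Λ.lab (e n) = f n}

/-- `ℒ^{≤∞} = ℒ^* ∪ ℒ^∞`, as a predicate on `Word A`. -/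
def IsWordW : Word A → Prop := Sum.elim (· ∈ Λ.LStar) (· ∈ Λ.LInfty)

/-- The relative range `r(X, α)` (with `r(X, ω) = X`). -/
noncomputable def relRange (X : Set V) (α : List A) : Set V :=
  if α = [] then X
  else {v | ∃ (l : List Ed) (h : l ≠ []), List.Chain' (fun e f => Λ.rng e = Λ.src f) l ∧
        l.map Λ.lab = α ∧ Λ.src (l.head h) ∈ X ∧ Λ.rng (l.getLast h) = v}

/-- The range `r(α) = r(E⁰, α)`. -/
noncomputable def rangeL (α : List A) : Set V := Λ.relRange Set.univ α

/-- `𝒜^α = {X ∈ 𝒜 : X ⊆ r(α)}`. -/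
noncomputable def Aset (α : List A) : Set (Set V) := {X | X ∈ Λ.𝒜 ∧ X ⊆ Λ.rangeL α}

/-- `(E, ℒ, 𝒜)` is a labelled space: `𝒜` is closed under finite intersections and
unions, contains all ranges `r(α)` for `α ∈ ℒ^{≥1}`, and is closed under relative ranges. -/
structure IsLS : Prop where
  inter_mem : ∀ X ∈ Λ.𝒜, ∀ Y ∈ Λ.𝒜, X ∩ Y ∈ Λ.𝒜
  union_mem : ∀ X ∈ Λ.𝒜, ∀ Y ∈ Λ.𝒜, X ∪ Y ∈ Λ.𝒜
  range_mem : ∀ α ∈ Λ.LStar, α ≠ [] → Λ.rangeL α ∈ Λ.𝒜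
  relRange_mem : ∀ X ∈ Λ.𝒜, ∀ α ∈ Λ.LStar, Λ.relRange X α ∈ Λ.𝒜

/-- A weakly left-resolving labelled space. -/
structure IsWLR : Prop where
  toIsLS : Λ.IsLS
  wlr : ∀ X ∈ Λ.𝒜, ∀ Y ∈ Λ.𝒜, ∀ α ∈ Λ.LStar, α ≠ [] →
    Λ.relRange (X ∩ Y) α = Λ.relRange X α ∩ Λ.relRange Y α

/-- A weakly left-resolving normal labelled space. -/
structure IsNormal : Prop where
  toIsWLR : Λ.IsWLR
  sdiff_mem : ∀ X ∈ Λ.𝒜, ∀ Y ∈ Λ.𝒜, X \ Y ∈ Λ.𝒜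

/-! ## The inverse semigroup `S` -/

/-- The underlying set of the inverse semigroup
`S = {(α,A,β) : α, β ∈ ℒ^*, A ∈ 𝒜^α ∩ 𝒜^β, A ≠ ∅} ∪ {0}`. -/
def SSet : Set (Tr V A) :=
  {t | t = Tr.zero ∨ ∃ α X β, t = Tr.mk α X β ∧ α ∈ Λ.LStar ∧ β ∈ Λ.LStar ∧
    X ∈ Λ.Aset α ∧ X ∈ Λ.Aset β ∧ X.Nonempty}

/-- The semilattice of idempotents `E(S) = {(α,A,α)} ∪ {0}`. -/
def ESet : Set (Tr V A) :=
  {t | t = Tr.zero ∨ ∃ α X, t = Tr.mk α X α ∧ α ∈ Λ.LStar ∧ X ∈ Λ.Aset α ∧ X.Nonempty}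

/-- The product of `S`. -/
noncomputable def tmul : Tr V A → Tr V A → Tr V A
  | Tr.zero, _ => Tr.zero
  | Tr.mk _ _ _, Tr.zero => Tr.zero
  | Tr.mk α X β, Tr.mk γ Y δ =>
    if β <+: γ ∧ (Λ.relRange X (γ.drop β.length) ∩ Y).Nonempty then
      Tr.mk (α ++ γ.drop β.length) (Λ.relRange X (γ.drop β.length) ∩ Y) δ
    else if γ <+: β ∧ (X ∩ Λ.relRange Y (β.drop γ.length)).Nonempty then
      Tr.mk α (X ∩ Λ.relRange Y (β.drop γ.length)) (δ ++ β.drop γ.length)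
    else Tr.zero

/-! ## Filters in `E(S)`, characters, and the tight spectrum -/

/-- A filter in `E(S)`: a nonempty subset of `E(S) ∖ {0}` closed under products and
upward closed in the natural order (`p ≤ q ↔ pq = p`). -/
def IsFilterES (ξ : Set (Tr V A)) : Prop :=
  ξ.Nonempty ∧ (∀ t ∈ ξ, t ∈ Λ.ESet ∧ t ≠ Tr.zero) ∧
  (∀ p ∈ ξ, ∀ q ∈ ξ, Λ.tmul p q ∈ ξ) ∧
  (∀ p ∈ ξ, ∀ q ∈ Λ.ESet, Λ.tmul p q = p → q ∈ ξ)

/-- An ultrafilter in `E(S)`. -/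
def IsUltraES (ξ : Set (Tr V A)) : Prop :=
  Λ.IsFilterES ξ ∧ ∀ ζ, Λ.IsFilterES ζ → ξ ⊆ ζ → ξ = ζ

/-- The character (indicator function) of a filter. -/
noncomputable def charOf (_Λ : LblSp V Ed A) (ξ : Set (Tr V A)) : Tr V A → Bool :=
  fun t => if t ∈ ξ then true else false

/-- A character of `E(S)`: a nonzero, zero- and meet-preserving `{0,1}`-valued map on
`E(S)` (encoded as a map on triples vanishing outside `E(S)`). -/
def IsChar (φ : Tr V A → Bool) : Prop :=
  (∃ e, φ e = true) ∧ (∀ e, e ∉ Λ.ESet → φ e = false) ∧ φ Tr.zero = false ∧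
  ∀ e ∈ Λ.ESet, ∀ f ∈ Λ.ESet, φ (Λ.tmul e f) = (φ e && φ f)

/-- The tight spectrum `Ê_tight`: the closure, within the space of characters with the
topology of pointwise convergence, of the set of characters of ultrafilters. -/
def tightSpectrum : Set (Tr V A → Bool) :=
  {φ | Λ.IsChar φ} ∩ closure {φ | ∃ ξ, Λ.IsUltraES ξ ∧ φ = Λ.charOf ξ}

/-- A tight filter: a filter whose character lies in the tight spectrum. -/
def IsTightFilter (ξ : Set (Tr V A)) : Prop :=
  Λ.IsFilterES ξ ∧ Λ.charOf ξ ∈ Λ.tightSpectrum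

/-- `ξ_{|β|} = {B : (β, B, β) ∈ ξ}`, the filter of `ξ` at level `β`. -/
def filterAt (_Λ : LblSp V Ed A) (ξ : Set (Tr V A)) (β : List A) : Set (Set V) :=
  {B | Tr.mk β B β ∈ ξ}

/-- `α` is the word associated with the filter `ξ` (i.e. `ξ = ξ^α`): the nonempty finite
beginnings of `α` are exactly the words appearing in elements of `ξ`. -/
def HasWord (_Λ : LblSp V Ed A) (ξ : Set (Tr V A)) (α : Word A) : Prop :=
  ∀ β : List A, β ≠ [] → ((∃ B, Tr.mk β B β ∈ ξ) ↔ WPrefix β α)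

/-! ## Filters and ultrafilters in `𝒜^β` -/

/-- A filter in the Boolean algebra `𝒜^β`. -/
def IsFilterAset (β : List A) (F : Set (Set V)) : Prop :=
  F.Nonempty ∧ F ⊆ Λ.Aset β ∧ (∀ X ∈ F, X.Nonempty) ∧
  (∀ X ∈ F, ∀ Y ∈ F, X ∩ Y ∈ F) ∧ (∀ X ∈ F, ∀ Y ∈ Λ.Aset β, X ⊆ Y → Y ∈ F)

/-- An ultrafilter in `𝒜^β` (an element of `X_β`). -/
def IsUltraAset (β : List A) (F : Set (Set V)) : Prop :=
  Λ.IsFilterAset β F ∧ ∀ G, Λ.IsFilterAset β G → F ⊆ G → F = G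

/-- The gluing map `g_{(α)β}(F) = {C ∩ r(αβ) : C ∈ F}` on ultrafilters. -/
noncomputable def gmap (α β : List A) (F : Set (Set V)) : Set (Set V) :=
  {X | ∃ C ∈ F, X = C ∩ Λ.rangeL (α ++ β)}

/-- The cutting map `h_{[α]β}(F) = {C ∈ 𝒜^β : D ⊆ C for some D ∈ F}` on ultrafilters. -/
noncomputable def hmap (α β : List A) (F : Set (Set V)) : Set (Set V) :=
  {C | C ∈ Λ.Aset β ∧ ∃ D ∈ F, D ⊆ C}

/-! ## Cutting and gluing of (tight) filters in `E(S)` -/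

/-- The cutting map `H_{[α]β} : T^{αβ} → T^{(α)β}` (word-free formulation): the filter
whose family is `η_n = h_{[α]β_{1,n}}(ξ_{n+|α|})`; `H_{[ω]β}` is the identity. -/
noncomputable def Hcut (α : List A) (ξ : Set (Tr V A)) : Set (Tr V A) :=
  if α = [] then ξ
  else {t | ∃ δ B, t = Tr.mk δ B δ ∧ B ∈ Λ.Aset δ ∧
        ∃ D, Tr.mk (α ++ δ) D (α ++ δ) ∈ ξ ∧ D ⊆ B}

/-- The gluing map `G_{(α)β} : T^{(α)β} → T^{αβ}` (word-free formulation): the filter with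
family `η_{|α|+n} = g_{(α)β_{1,n}}(ξ_n)` for `n ≥ 1` and `η_i = f_{α_{1,i}[…]}(…)` for
`i ≤ |α|`, with the two cases according to whether the word of `ξ` is empty (`β = ω`)
or not; `G_{(ω)β}` is the identity. -/
noncomputable def Gglue (α : List A) (ξ : Set (Tr V A)) : Set (Tr V A) :=
  if α = [] then ξ
  else if ∃ (δ : List A) (B : Set V), δ ≠ [] ∧ Tr.mk δ B δ ∈ ξ then
    {t | ∃ δ B, t = Tr.mk δ B δ ∧
      ((α <+: δ ∧ α ≠ δ ∧ ∃ C, Tr.mk (δ.drop α.length) C (δ.drop α.length) ∈ ξ ∧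
          B = C ∩ Λ.rangeL δ) ∨
       (δ <+: α ∧ B ∈ Λ.Aset δ ∧ ∃ (b : A) (C : Set V), Tr.mk [b] C [b] ∈ ξ ∧
          Λ.relRange B (α.drop δ.length ++ [b]) = C ∩ Λ.rangeL (α ++ [b])))}
  else
    {t | ∃ δ B, t = Tr.mk δ B δ ∧ δ <+: α ∧ B ∈ Λ.Aset δ ∧
      ∃ C, Tr.mk [] C [] ∈ ξ ∧ Λ.relRange B (α.drop δ.length) = C ∩ Λ.rangeL α}

/-- `T^β`: the set of tight filters with associated word `β`. -/
def TWord (β : Word A) : Set (Set (Tr V A)) :=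
  {ξ | Λ.IsTightFilter ξ ∧ Λ.HasWord ξ β}

/-- `T^{(α)β} = {ξ ∈ T^β : r(α) ∈ ξ_0}` (equal to `T^β` when `α = ω`), the domain of the
gluing map `G_{(α)β}`. -/
def TGlueDom (α : List A) (β : Word A) : Set (Set (Tr V A)) :=
  {ξ | Λ.IsTightFilter ξ ∧ Λ.HasWord ξ β ∧ (α ≠ [] → Tr.mk [] (Λ.rangeL α) [] ∈ ξ)}

/-! ## The groupoid `Γ` -/

/-- The defining relation of
`Γ = {(ξ^{aγ}, |a|-|b|, η^{bγ}) ∈ T × ℤ × T : H_{[a]γ}(ξ^{aγ}) = H_{[b]γ}(η^{bγ})}`. -/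
def InGamma (η : Set (Tr V A)) (m : ℤ) (ξ : Set (Tr V A)) : Prop :=
  ∃ (a b : List A) (γ : Word A), a ∈ Λ.LStar ∧ b ∈ Λ.LStar ∧ Λ.IsWordW γ ∧
    η ∈ Λ.TWord (wappend a γ) ∧ ξ ∈ Λ.TWord (wappend b γ) ∧
    m = (a.length : ℤ) - (b.length : ℤ) ∧ Λ.Hcut a η = Λ.Hcut b ξ

/-- `Γ` as a set of raw triples. -/
def GammaRaw : Set (Set (Tr V A) × ℤ × Set (Tr V A)) :=
  {p | Λ.InGamma p.1 p.2.1 p.2.2}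

/-- The basic set `Z_{s,e:e₁,…,eₙ}` of `Γ` (raw version), for `s = (μ, X, ν)`:
triples `(η^{μγ}, |μ|-|ν|, ξ^{νγ}) ∈ Γ` with `e ∈ ξ`, `eᵢ ∉ ξ` and
`H_{[μ]γ}(η) = H_{[ν]γ}(ξ)`. -/
noncomputable def ZrawGen (μ ν : List A) (e : Tr V A) (es : List (Tr V A)) :
    Set (Set (Tr V A) × ℤ × Set (Tr V A)) :=
  {p | Λ.InGamma p.1 p.2.1 p.2.2 ∧ p.2.1 = (μ.length : ℤ) - (ν.length : ℤ) ∧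
       e ∈ p.2.2 ∧ (∀ f ∈ es, f ∉ p.2.2) ∧
       ∃ γ : Word A, Λ.HasWord p.1 (wappend μ γ) ∧ Λ.HasWord p.2.2 (wappend ν γ) ∧
         Λ.Hcut μ p.1 = Λ.Hcut ν p.2.2}

/-- `Z_s = Z_{s, s*s}` for `s = (μ, X, ν)` (raw version). -/
noncomputable def Zraw (μ : List A) (X : Set V) (ν : List A) :
    Set (Set (Tr V A) × ℤ × Set (Tr V A)) :=
  Λ.ZrawGen μ ν (Tr.mk ν X ν) []

/-- The basic set `V_{e:e₁,…,eₙ} = U_{e:e₁,…,eₙ} ∩ T` of the tight filter space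
(raw version). -/
def VrawGen (e : Tr V A) (es : List (Tr V A)) : Set (Set (Tr V A)) :=
  {ξ | Λ.IsTightFilter ξ ∧ e ∈ ξ ∧ ∀ f ∈ es, f ∉ ξ}

/-- The shift map `σ : T^{(1)} → T`, `σ(ξ^{aγ}) = H_{[a]γ}(ξ^{aγ})` (extended by the
identity off its domain). -/
noncomputable def sigmaMap (ξ : Set (Tr V A)) : Set (Tr V A) :=
  if h : ∃ a : A, ∃ B : Set V, Tr.mk [a] B [a] ∈ ξ then Λ.Hcut [h.choose] ξ else ξ

/-- The Renault–Deaconu basic set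
`𝒱(X, Y, m, n) = {(η, m-n, ξ) ∈ Γ : (η, ξ) ∈ X × Y, σ^m(η) = σ^n(ξ)}` (raw version). -/
noncomputable def VrdRaw (Xs Ys : Set (Set (Tr V A))) (m n : ℕ) :
    Set (Set (Tr V A) × ℤ × Set (Tr V A)) :=
  {p | Λ.InGamma p.1 p.2.1 p.2.2 ∧ p.2.1 = (m : ℤ) - (n : ℤ) ∧
       p.1 ∈ Xs ∧ p.2.2 ∈ Ys ∧ (Λ.sigmaMap)^[m] p.1 = (Λ.sigmaMap)^[n] p.2.2}

/-! ## The groupoid of germs `𝒢_tight` -/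

/-- The action `θ_s(φ)(e) = φ(s* e s)` of `S` on characters. -/
noncomputable def theta (s : Tr V A) (φ : Tr V A → Bool) : Tr V A → Bool :=
  fun e => if e ∈ Λ.ESet then φ (Λ.tmul (Λ.tmul (Tr.tstar s) e) s) else false

/-- `Ω = {(s, φ) ∈ S × Ê_tight : φ ∈ D_{s*s}}`. -/
noncomputable def Omega : Set (Tr V A × (Tr V A → Bool)) :=
  {p | p.1 ∈ Λ.SSet ∧ p.2 ∈ Λ.tightSpectrum ∧ p.2 (Λ.tmul (Tr.tstar p.1) p.1) = true}

/-- The germ equivalence relation on `Ω`: `(s,φ) ∼ (t,ψ)` iff `φ = ψ` and there is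
`e ∈ E(S)` with `φ(e) = 1` and `se = te`. -/
noncomputable def germEquiv (p q : Tr V A × (Tr V A → Bool)) : Prop :=
  p.2 = q.2 ∧ ∃ e ∈ Λ.ESet, p.2 e = true ∧ Λ.tmul p.1 e = Λ.tmul q.1 e

/-- The map `Φ` at the level of `Ω`: for `t = (β, X, γ)` and `φ` with filter `ξ^α`
(where `α = γα'`), `Φ[t,φ] = ((G_{(β)α'} ∘ H_{[γ]α'})(ξ^α), |β|-|γ|, ξ^α)`. -/
noncomputable def PhiRaw : Tr V A → (Tr V A → Bool) → Set (Tr V A) × ℤ × Set (Tr V A)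
  | Tr.zero, _ => (∅, 0, ∅)
  | Tr.mk β _ γ, φ =>
      (Λ.Gglue β (Λ.Hcut γ {e | φ e = true}), (β.length : ℤ) - (γ.length : ℤ),
        {e | φ e = true})

/-! ## Miscellaneous notions -/

/-- `ℒ(XE¹) = {ℒ(e) : e ∈ E¹, s(e) ∈ X}`. -/
def labE (X : Set V) : Set A := {a | ∃ e, Λ.lab e = a ∧ Λ.src e ∈ X}

/-- The set `E⁰_sink` of sinks. -/
def sinks : Set V := {v | ∀ e, Λ.src e ≠ v}

/-- The filter in `E(S)` associated with a pair (word, complete family). -/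
def pairFilter (_Λ : LblSp V Ed A) (α : Word A) (F : ℕ → Set (Set V)) : Set (Tr V A) :=
  {t | ∃ (n : ℕ) (B : Set V), (n : ℕ∞) ≤ wlength α ∧ B ∈ F n ∧
    t = Tr.mk (wprefix α n) B (wprefix α n)}

/-- A complete family for the word `α`: `F n` is a filter in `𝒜^{α_{1,n}}` for
`1 ≤ n ≤ |α|` (`F 0` is a filter in `𝒜` or empty, and a filter if `α = ω`), and
`F n = {X ∈ 𝒜^{α_{1,n}} : r(X, α_{n+1}) ∈ F (n+1)}` for all `n < |α|`. -/
noncomputable def IsCompleteFamily (α : Word A) (F : ℕ → Set (Set V)) : Prop :=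
  Λ.IsWordW α ∧
  (∀ n : ℕ, 1 ≤ n → (n : ℕ∞) ≤ wlength α → Λ.IsFilterAset (wprefix α n) (F n)) ∧
  (F 0 = ∅ ∨ Λ.IsFilterAset [] (F 0)) ∧
  (wlength α = 0 → Λ.IsFilterAset [] (F 0)) ∧
  (∀ n : ℕ, ((n + 1 : ℕ) : ℕ∞) ≤ wlength α →
    F n = {X | X ∈ Λ.Aset (wprefix α n) ∧
      Λ.relRange X ((wprefix α (n + 1)).drop n) ∈ F (n + 1)})

/-! ## The tight filter space `T` and the groupoid `Γ` as types -/

/-- The space `T` of tight filters. -/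
structure TightT where
  carrier : Set (Tr V A)
  tight : Λ.IsTightFilter carrier

/-- The topology of `T`, induced from pointwise convergence of characters. -/
noncomputable instance : TopologicalSpace Λ.TightT :=
  TopologicalSpace.induced (fun ξ => Λ.charOf ξ.carrier) inferInstance

/-- The groupoid `Γ ⊆ T × ℤ × T` as a type. -/
structure GammaT where
  fst : Λ.TightT
  mid : ℤ
  lst : Λ.TightT
  mem : Λ.InGamma fst.carrier mid lst.carrier

/-- The raw triple underlying an element of `Γ`. -/
def rawOf (p : Λ.GammaT) : Set (Tr V A) × ℤ × Set (Tr V A) :=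
  (p.fst.carrier, p.mid, p.lst.carrier)

/-- The collection of all sets `Z_{s,e:e₁,…,eₙ}` (for `s ∈ S`, `e, eᵢ ∈ E(S)`),
as subsets of `Γ`. -/
noncomputable def ZBasisT : Set (Set Λ.GammaT) :=
  {Z | ∃ (μ : List A) (X : Set V) (ν : List A) (e : Tr V A) (es : List (Tr V A)),
    Tr.mk μ X ν ∈ Λ.SSet ∧ e ∈ Λ.ESet ∧ (∀ f ∈ es, f ∈ Λ.ESet) ∧
    Z = {p : Λ.GammaT | Λ.rawOf p ∈ Λ.ZrawGen μ ν e es}}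

/-- The topology on `Γ` induced by the isomorphism `Φ` from the germ topology of
`𝒢_tight`, generated by the images of the basic sets `Θ(s, 𝒰)` with `𝒰 ⊆ D_{s*s}`
open in the tight spectrum. -/
noncomputable def PhiTopology : TopologicalSpace Λ.GammaT :=
  TopologicalSpace.generateFrom
    {Z | ∃ (s : Tr V A) (U : Set (Tr V A → Bool)), s ∈ Λ.SSet ∧
      (∃ W, IsOpen W ∧ U = W ∩ Λ.tightSpectrum) ∧
      (∀ φ ∈ U, φ (Λ.tmul (Tr.tstar s) s) = true) ∧
      Z = {p : Λ.GammaT | ∃ φ ∈ U, (s, φ) ∈ Λ.Omega ∧ Λ.PhiRaw s φ = Λ.rawOf p}}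

end LblSp

namespace LblSp

variable {V : Type u} {Ed : Type v} {A : Type w} (Λ : LblSp V Ed A)

/-! In `S`, multiplying `(μ, X, ν)` on the right by an idempotent `(δ, C, δ)` either gives `0`
or extends both words `μ` and `ν` by one common suffix `x`, and whether it gives `0` does not
depend on `μ`. Applied to `s` and `t`, an equality `se = te ≠ 0` forces `μx = βy` and `νx = νγ'y`,
hence `β = μγ'`. Conversely, for `β = μγ'` the idempotent `e = s*s t*t = (νγ', r(X,γ') ∩ Y, νγ')`
lies in the filter of `φ` and `se = te = (μγ', r(X,γ') ∩ Y, νγ')`. -/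

lemma relRange_nil (X : Set V) : Λ.relRange X [] = X := if_pos rfl

lemma tmul_mk (α β γ δ : List A) (X Y : Set V) :
    Λ.tmul (Tr.mk α X β) (Tr.mk γ Y δ) =
      if β <+: γ ∧ (Λ.relRange X (γ.drop β.length) ∩ Y).Nonempty then
        Tr.mk (α ++ γ.drop β.length) (Λ.relRange X (γ.drop β.length) ∩ Y) δ
      else if γ <+: β ∧ (X ∩ Λ.relRange Y (β.drop γ.length)).Nonempty then
        Tr.mk α (X ∩ Λ.relRange Y (β.drop γ.length)) (δ ++ β.drop γ.length)
      else Tr.zero := rfl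

lemma tmul_mk_append (μ ν x δ : List A) (X C : Set V) :
    Λ.tmul (Tr.mk μ X ν) (Tr.mk (ν ++ x) C δ) =
      if (Λ.relRange X x ∩ C).Nonempty then Tr.mk (μ ++ x) (Λ.relRange X x ∩ C) δ
      else Tr.zero := by
  rw [tmul_mk, List.drop_left]
  by_cases hne : (Λ.relRange X x ∩ C).Nonempty
  · rw [if_pos ⟨List.prefix_append _ _, hne⟩, if_pos hne]
  · have hprefix : ¬ (ν ++ x <+: ν ∧ (X ∩ Λ.relRange C (ν.drop (ν ++ x).length)).Nonempty) := by
      rintro ⟨hpre, hX⟩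
      obtain rfl : x = [] := by simpa using hpre.length_le
      simp only [List.append_nil, List.drop_length, relRange_nil] at hX hne
      exact hne (Set.inter_comm X C ▸ hX)
    rw [if_neg fun h => hne h.2, if_neg hprefix, if_neg hne]

lemma tmul_mk_self (μ ν δ : List A) (X C : Set V) :
    Λ.tmul (Tr.mk μ X ν) (Tr.mk ν C δ) =
      if (X ∩ C).Nonempty then Tr.mk μ (X ∩ C) δ else Tr.zero := by
  simpa [relRange_nil] using Λ.tmul_mk_append μ ν [] δ X C

lemma tmul_tstar_mk_self (μ ν : List A) (X : Set V) :
    Λ.tmul (Tr.mk μ X ν).tstar (Tr.mk μ X ν) = if X.Nonempty then Tr.mk ν X ν else Tr.zero := by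
  rw [Tr.tstar, tmul_mk_self, Set.inter_self]

lemma tmul_mk_idempotent_eq_zero_or (ν δ : List A) (X C : Set V) :
    (∀ μ, Λ.tmul (Tr.mk μ X ν) (Tr.mk δ C δ) = Tr.zero) ∨
      ∃ x Z, ∀ μ, Λ.tmul (Tr.mk μ X ν) (Tr.mk δ C δ) = Tr.mk (μ ++ x) Z (ν ++ x) := by
  by_cases hνδ : ν <+: δ
  · obtain ⟨x, rfl⟩ := hνδ
    simp only [tmul_mk_append]
    split_ifs
    · exact Or.inr ⟨x, _, fun _ => rfl⟩
    · exact Or.inl fun _ => rfl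
  by_cases hδν : δ <+: ν ∧ (X ∩ Λ.relRange C (ν.drop δ.length)).Nonempty
  · obtain ⟨⟨w, rfl⟩, -⟩ := id hδν
    refine Or.inr ⟨[], X ∩ Λ.relRange C w, fun μ => ?_⟩
    rw [tmul_mk, if_neg fun h => hνδ h.1, if_pos hδν, List.drop_left]
    simp
  · exact Or.inl fun μ => by rw [tmul_mk, if_neg fun h => hνδ h.1, if_neg hδν]

namespace IsChar

variable {Λ} {φ : Tr V A → Bool}

lemma mem_ESet (hφ : Λ.IsChar φ) {e : Tr V A} (he : φ e = true) : e ∈ Λ.ESet := by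
  by_contra h
  simp [hφ.2.1 e h] at he

lemma ne_zero (hφ : Λ.IsChar φ) {e : Tr V A} (he : φ e = true) : e ≠ Tr.zero := by
  rintro rfl
  simp [hφ.2.2.1] at he

lemma apply_tmul (hφ : Λ.IsChar φ) {e f : Tr V A} (he : φ e = true) (hf : φ f = true) :
    φ (Λ.tmul e f) = true := by
  rw [hφ.2.2.2 e (hφ.mem_ESet he) f (hφ.mem_ESet hf), he, hf, Bool.and_self]

end IsChar

lemma apply_source_of_mem_Omega {μ ν : List A} {X : Set V} {φ : Tr V A → Bool}
    (h : (Tr.mk μ X ν, φ) ∈ Λ.Omega) : φ (Tr.mk ν X ν) = true := by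
  have hφ : Λ.IsChar φ := h.2.1.1
  have hsource := h.2.2
  simp only [tmul_tstar_mk_self] at hsource
  split_ifs at hsource
  · exact hsource
  · exact absurd rfl (hφ.ne_zero hsource)

lemma eq_append_of_germEquiv {μ ν β γ' : List A} {X Y : Set V} {φ : Tr V A → Bool}
    (hsΩ : (Tr.mk μ X ν, φ) ∈ Λ.Omega)
    (h : Λ.germEquiv (Tr.mk μ X ν, φ) (Tr.mk β Y (ν ++ γ'), φ)) : β = μ ++ γ' := by
  have hφ : Λ.IsChar φ := hsΩ.2.1.1
  obtain ⟨-, e, heE, hφe, hst⟩ := h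
  obtain ⟨δ, C, rfl, -⟩ := heE.resolve_left (hφ.ne_zero hφe)
  have hsource_ne : Λ.tmul (Tr.mk ν X ν) (Tr.mk δ C δ) ≠ Tr.zero :=
    hφ.ne_zero (hφ.apply_tmul (Λ.apply_source_of_mem_Omega hsΩ) hφe)
  obtain hs | ⟨x, Z, hs⟩ := Λ.tmul_mk_idempotent_eq_zero_or ν δ X C
  · exact absurd (hs ν) hsource_ne
  obtain ht | ⟨y, Z', ht⟩ := Λ.tmul_mk_idempotent_eq_zero_or (ν ++ γ') δ Y C
  · exact absurd (hst.trans (ht β)) (by simp [hs])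
  obtain ⟨hleft, -, hright⟩ := Tr.mk.inj ((hs μ).symm.trans (hst.trans (ht β)))
  obtain rfl : x = γ' ++ y := by simpa using hright
  exact (List.append_cancel_right (by simpa using hleft)).symm

lemma germEquiv_of_eq_append {μ ν γ' : List A} {X Y : Set V} {φ : Tr V A → Bool}
    (hsΩ : (Tr.mk μ X ν, φ) ∈ Λ.Omega) (htΩ : (Tr.mk (μ ++ γ') Y (ν ++ γ'), φ) ∈ Λ.Omega) :
    Λ.germEquiv (Tr.mk μ X ν, φ) (Tr.mk (μ ++ γ') Y (ν ++ γ'), φ) := by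
  have hφ : Λ.IsChar φ := hsΩ.2.1.1
  set D := Λ.relRange X γ' ∩ Y
  have hφe := hφ.apply_tmul (Λ.apply_source_of_mem_Omega hsΩ) (Λ.apply_source_of_mem_Omega htΩ)
  rw [tmul_mk_append] at hφe
  split_ifs at hφe with hD
  · refine ⟨rfl, _, hφ.mem_ESet hφe, hφe, ?_⟩
    have hXD : Λ.relRange X γ' ∩ D = D := by rw [← Set.inter_assoc, Set.inter_self]
    have hYD : Y ∩ D = D := Set.inter_eq_right.mpr Set.inter_subset_right
    change Λ.tmul (Tr.mk μ X ν) (Tr.mk (ν ++ γ') D (ν ++ γ')) =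
      Λ.tmul (Tr.mk (μ ++ γ') Y (ν ++ γ')) (Tr.mk (ν ++ γ') D (ν ++ γ'))
    rw [tmul_mk_append, tmul_mk_self, hXD, hYD, if_pos hD]
  · exact absurd rfl (hφ.ne_zero hφe)

theorem statement_8 (μ ν β γ γ' : List A) (X Y : Set V)
    (φ : Tr V A → Bool)
    (hsΩ : (Tr.mk μ X ν, φ) ∈ Λ.Omega) (htΩ : (Tr.mk β Y γ, φ) ∈ Λ.Omega)
    (hγ : γ = ν ++ γ') :
    Λ.germEquiv (Tr.mk μ X ν, φ) (Tr.mk β Y γ, φ) ↔ β = μ ++ γ' := by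
  subst hγ
  refine ⟨Λ.eq_append_of_germEquiv hsΩ, ?_⟩
  rintro rfl
  exact Λ.germEquiv_of_eq_append hsΩ htΩ

end LblSp
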